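/- (Joint convexity for α ∈ [0,1].) For any order α ∈ [0,1], any two pairs of probability distributions (P₀, Q₀) and (P₁, Q₁) on a common measurable space, and any λ ∈ (0,1), the Rényi divergence satisfies D_α((1−λ)P₀ + λP₁ ‖ (1−λ)Q₀ + λQ₁) ≤ (1−λ)·D_α(P₀‖Q₀) + λ·D_α(P₁‖Q₁). -/

import Mathlib

open MeasureTheory Real Filter Set
open scoped ENNReal NNReal Topology Classical

/-- The Hellinger integral `∫ p^α q^(1-α) dμ`, computed with the dominating
measure `μ = P + Q` (the value does not depend on the choice of dominating
measure). The `ℝ≥0∞`-valued `rpow` automatically implements the conventions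
`0/0 = 0` and `x/0 = ∞` for `x > 0` when `α > 1`. -/
noncomputable def hellingerInt {X : Type*} [MeasurableSpace X]
    (α : ℝ) (P Q : Measure X) : ℝ≥0∞ :=
  ∫⁻ x, P.rnDeriv (P + Q) x ^ α * Q.rnDeriv (P + Q) x ^ (1 - α) ∂(P + Q)

/-- Rényi divergence of a simple order `α ∈ (0,1) ∪ (1,∞)`:
`D_α(P‖Q) = (α-1)⁻¹ log ∫ p^α q^(1-α) dμ`. -/
noncomputable def renyiSimple {X : Type*} [MeasurableSpace X]
    (α : ℝ) (P Q : Measure X) : EReal :=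
  (((α - 1)⁻¹ : ℝ) : EReal) * ENNReal.log (hellingerInt α P Q)

/-- Rényi divergence of any order `α ∈ [0,∞]`.  The extended orders `0`, `1`, `∞`
are defined as the limits of the simple orders (the limits exist by monotonicity
in the order, so they coincide with the `limsup`s used here). -/
noncomputable def renyiDiv {X : Type*} [MeasurableSpace X]
    (α : ℝ≥0∞) (P Q : Measure X) : EReal :=
  if α = 0 then Filter.limsup (fun a : ℝ => renyiSimple a P Q) (nhdsWithin (0:ℝ) (Set.Ioi 0))
  else if α = 1 then Filter.limsup (fun a : ℝ => renyiSimple a P Q) (nhdsWithin (1:ℝ) (Set.Iio 1))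
  else if α = ∞ then Filter.limsup (fun a : ℝ => renyiSimple a P Q) Filter.atTop
  else renyiSimple α.toReal P Q

/-- Kullback-Leibler divergence `D(P‖Q) = ∫ p log (p/q) dμ`, with the conventions
`0 log (0/q) = 0` and `p log (p/0) = ∞` for `p > 0`; in particular `D(P‖Q) = ∞`
whenever `P` is not absolutely continuous w.r.t. `Q`, or the integral diverges. -/
noncomputable def klDiv {X : Type*} [MeasurableSpace X] (P Q : Measure X) : EReal :=
  if P ≪ Q ∧ Integrable (llr P Q) P then ((∫ x, llr P Q x ∂P : ℝ) : EReal) else ⊤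


/-! For `0 ≤ a ≤ 1` the Hellinger integral `H_a(P, Q) = ∫ p ^ a q ^ (1 - a) dμ` is at most `1`
(Hölder), positively homogeneous and superadditive in the pair `(P, Q)` (Hölder on two points),
hence jointly concave. Weighted AM-GM then gives
`H_a(P_λ, Q_λ) ≥ H_a(P₀, Q₀) ^ (1 - λ) * H_a(P₁, Q₁) ^ λ` for the mixtures, which is the
convexity of `D_a = (1 - a)⁻¹ log H_a⁻¹`. The orders `0` and `1` are limsups of orders in
`(0, 1)`, and the limsup of a combination of nonnegative functions with nonnegative weights is at
most the same combination of the limsups. -/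

namespace ENNReal

theorem geom_mean_le_arith_mean2_weighted {w₁ w₂ : ℝ≥0∞} (hw : w₁ + w₂ = 1) (p₁ p₂ : ℝ≥0∞) :
    p₁ ^ w₁.toReal * p₂ ^ w₂.toReal ≤ w₁ * p₁ + w₂ * p₂ := by
  obtain ⟨hw₁, hw₂⟩ := add_ne_top.1 (hw ▸ one_ne_top)
  lift w₁ to ℝ≥0 using hw₁
  lift w₂ to ℝ≥0 using hw₂
  have hw' : w₁ + w₂ = 1 := mod_cast hw
  rcases eq_or_ne p₁ ⊤ with rfl | hp₁
  · rcases eq_or_ne w₁ 0 with rfl | h₁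
    · simp_all
    · simp [h₁]
  rcases eq_or_ne p₂ ⊤ with rfl | hp₂
  · rcases eq_or_ne w₂ 0 with rfl | h₂
    · simp_all
    · simp [h₂]
  lift p₁ to ℝ≥0 using hp₁
  lift p₂ to ℝ≥0 using hp₂
  simpa [← coe_rpow_of_nonneg] using
    coe_le_coe.2 (NNReal.geom_mean_le_arith_mean2_weighted w₁ w₂ p₁ p₂ hw')

theorem mul_rpow_mul_mul_rpow {p q : ℝ} (hp : 0 ≤ p) (hq : 0 ≤ q) (hpq : p + q = 1)
    (c x y : ℝ≥0∞) : (c * x) ^ p * (c * y) ^ q = c * (x ^ p * y ^ q) := by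
  rw [mul_rpow_of_nonneg _ _ hp, mul_rpow_of_nonneg _ _ hq, mul_mul_mul_comm,
    ← rpow_add_of_nonneg _ _ hp hq, hpq, rpow_one]

theorem rpow_mul_rpow_add_rpow_mul_rpow_le {p q : ℝ} (hp : 0 ≤ p) (hq : 0 ≤ q) (hpq : p + q = 1)
    (x₁ x₂ y₁ y₂ : ℝ≥0∞) :
    x₁ ^ p * y₁ ^ q + x₂ ^ p * y₂ ^ q ≤ (x₁ + x₂) ^ p * (y₁ + y₂) ^ q := by
  simpa [lintegral_add_measure] using
    lintegral_mul_norm_pow_le (μ := Measure.dirac true + Measure.dirac false)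
      (f := fun b => cond b x₁ x₂) (g := fun b => cond b y₁ y₂)
      (Measurable.of_discrete).aemeasurable (Measurable.of_discrete).aemeasurable hp hq hpq

end ENNReal

namespace EReal

theorem limsup_le_mul_limsup_add_mul_limsup {ι : Type*} {F : Filter ι} [F.NeBot]
    {f g h : ι → EReal} {c d : EReal} (hc₀ : 0 ≤ c) (hc : c ≠ ⊤) (hd₀ : 0 ≤ d) (hd : d ≠ ⊤)
    (hf : ∀ᶠ i in F, 0 ≤ f i) (hg : ∀ᶠ i in F, 0 ≤ g i)
    (hh : ∀ᶠ i in F, h i ≤ c * f i + d * g i) :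
    limsup h F ≤ c * limsup f F + d * limsup g F := by
  have hcf : 0 ≤ c * limsup f F := mul_nonneg hc₀ (le_limsup_of_frequently_le hf.frequently)
  have hdg : 0 ≤ d * limsup g F := mul_nonneg hd₀ (le_limsup_of_frequently_le hg.frequently)
  rw [← limsup_const_mul_of_nonneg_of_ne_top hc₀ hc] at hcf ⊢
  rw [← limsup_const_mul_of_nonneg_of_ne_top hd₀ hd] at hdg ⊢
  calc limsup h F ≤ limsup (fun i => c * f i + d * g i) F := limsup_le_limsup hh
    _ ≤ _ := limsup_add_le (.inl (ne_bot_of_le_ne_bot zero_ne_bot hcf))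
        (.inr (ne_bot_of_le_ne_bot zero_ne_bot hdg))

end EReal

section

variable {X : Type*} [MeasurableSpace X] {a : ℝ}

theorem hellingerInt_eq_lintegral_rnDeriv (ha₀ : 0 ≤ a) (ha₁ : a ≤ 1)
    {P Q ν : Measure X} [SigmaFinite P] [SigmaFinite Q] [SigmaFinite ν] (hP : P ≪ ν) (hQ : Q ≪ ν) :
    hellingerInt a P Q = ∫⁻ x, P.rnDeriv ν x ^ a * Q.rnDeriv ν x ^ (1 - a) ∂ν := by
  have hP' : P ≪ P + Q := Measure.AbsolutelyContinuous.rfl.add_right Q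
  have hQ' : Q ≪ P + Q := Measure.AbsolutelyContinuous.rfl.add_right' P
  rw [hellingerInt, ← lintegral_rnDeriv_mul (hP.add_left hQ) (by fun_prop)]
  refine lintegral_congr_ae ?_
  filter_upwards [Measure.rnDeriv_mul_rnDeriv (κ := ν) hP',
    Measure.rnDeriv_mul_rnDeriv (κ := ν) hQ'] with x hPx hQx
  rw [← hPx, ← hQx, Pi.mul_apply, Pi.mul_apply, mul_comm (P.rnDeriv _ x), mul_comm (Q.rnDeriv _ x),
    ENNReal.mul_rpow_mul_mul_rpow ha₀ (sub_nonneg.2 ha₁) (add_sub_cancel a 1)]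

theorem hellingerInt_le_one (ha₀ : 0 ≤ a) (ha₁ : a ≤ 1) (P Q : Measure X)
    [IsProbabilityMeasure P] [IsProbabilityMeasure Q] : hellingerInt a P Q ≤ 1 := by
  calc hellingerInt a P Q
      ≤ (∫⁻ x, P.rnDeriv (P + Q) x ∂(P + Q)) ^ a * (∫⁻ x, Q.rnDeriv (P + Q) x ∂(P + Q)) ^ (1 - a) :=
        ENNReal.lintegral_mul_norm_pow_le (by fun_prop) (by fun_prop) ha₀ (sub_nonneg.2 ha₁)
          (add_sub_cancel a 1)
    _ = 1 := by
        rw [Measure.lintegral_rnDeriv (Measure.AbsolutelyContinuous.rfl.add_right Q : P ≪ P + Q),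
          Measure.lintegral_rnDeriv (Measure.AbsolutelyContinuous.rfl.add_right' P : Q ≪ P + Q)]
        simp

theorem hellingerInt_smul (ha₀ : 0 ≤ a) (ha₁ : a ≤ 1) (P Q : Measure X)
    [IsFiniteMeasure P] [IsFiniteMeasure Q] {c : ℝ≥0∞} (hc : c ≠ ⊤) :
    hellingerInt a (c • P) (c • Q) = c * hellingerInt a P Q := by
  have := P.smul_finite hc
  have := Q.smul_finite hc
  have hP : P ≪ P + Q := Measure.AbsolutelyContinuous.rfl.add_right Q
  have hQ : Q ≪ P + Q := Measure.AbsolutelyContinuous.rfl.add_right' P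
  rw [hellingerInt_eq_lintegral_rnDeriv ha₀ ha₁ (hP.smul_left c) (hQ.smul_left c), hellingerInt,
    ← lintegral_const_mul _ (by fun_prop)]
  refine lintegral_congr_ae ?_
  filter_upwards [Measure.rnDeriv_smul_left_of_ne_top P (P + Q) hc,
    Measure.rnDeriv_smul_left_of_ne_top Q (P + Q) hc] with x hPx hQx
  rw [hPx, hQx, Pi.smul_apply, Pi.smul_apply, smul_eq_mul, smul_eq_mul,
    ENNReal.mul_rpow_mul_mul_rpow ha₀ (sub_nonneg.2 ha₁) (add_sub_cancel a 1)]

theorem hellingerInt_add_le (ha₀ : 0 ≤ a) (ha₁ : a ≤ 1) (P₀ P₁ Q₀ Q₁ : Measure X)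
    [IsFiniteMeasure P₀] [IsFiniteMeasure P₁] [IsFiniteMeasure Q₀] [IsFiniteMeasure Q₁] :
    hellingerInt a P₀ Q₀ + hellingerInt a P₁ Q₁ ≤ hellingerInt a (P₀ + P₁) (Q₀ + Q₁) := by
  let ν := P₀ + P₁ + (Q₀ + Q₁)
  have : IsFiniteMeasure ν := by dsimp [ν]; infer_instance
  have hP : P₀ + P₁ ≪ ν := Measure.AbsolutelyContinuous.rfl.add_right _
  have hQ : Q₀ + Q₁ ≪ ν := Measure.AbsolutelyContinuous.rfl.add_right' _
  have hP₀ : P₀ ≪ ν := (Measure.AbsolutelyContinuous.rfl.add_right P₁).trans hP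
  have hP₁ : P₁ ≪ ν := (Measure.AbsolutelyContinuous.rfl.add_right' P₀).trans hP
  have hQ₀ : Q₀ ≪ ν := (Measure.AbsolutelyContinuous.rfl.add_right Q₁).trans hQ
  have hQ₁ : Q₁ ≪ ν := (Measure.AbsolutelyContinuous.rfl.add_right' Q₀).trans hQ
  rw [hellingerInt_eq_lintegral_rnDeriv ha₀ ha₁ hP₀ hQ₀,
    hellingerInt_eq_lintegral_rnDeriv ha₀ ha₁ hP₁ hQ₁,
    hellingerInt_eq_lintegral_rnDeriv ha₀ ha₁ hP hQ, ← lintegral_add_left (by fun_prop)]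
  refine lintegral_mono_ae ?_
  filter_upwards [Measure.rnDeriv_add' P₀ P₁ ν, Measure.rnDeriv_add' Q₀ Q₁ ν] with x hPx hQx
  rw [hPx, hQx]
  exact ENNReal.rpow_mul_rpow_add_rpow_mul_rpow_le ha₀ (sub_nonneg.2 ha₁) (add_sub_cancel a 1)
    _ _ _ _

theorem renyiSimple_eq_mul_log_inv (P Q : Measure X) :
    renyiSimple a P Q = (((1 - a)⁻¹ : ℝ) : EReal) * ENNReal.log (hellingerInt a P Q)⁻¹ := by
  rw [renyiSimple, ENNReal.log_inv, mul_neg, ← neg_mul, ← EReal.coe_neg, ← inv_neg,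
    neg_sub]

theorem renyiSimple_nonneg (ha₀ : 0 ≤ a) (ha₁ : a ≤ 1) (P Q : Measure X)
    [IsProbabilityMeasure P] [IsProbabilityMeasure Q] : 0 ≤ renyiSimple a P Q := by
  rw [renyiSimple_eq_mul_log_inv]
  refine mul_nonneg (EReal.coe_nonneg.2 (inv_nonneg.2 (sub_nonneg.2 ha₁))) ?_
  exact ENNReal.zero_le_log_iff.2 (ENNReal.one_le_inv.2 (hellingerInt_le_one ha₀ ha₁ P Q))

theorem renyiSimple_mix_le (ha₀ : 0 ≤ a) (ha₁ : a ≤ 1) (P₀ P₁ Q₀ Q₁ : Measure X)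
    [IsProbabilityMeasure P₀] [IsProbabilityMeasure P₁]
    [IsProbabilityMeasure Q₀] [IsProbabilityMeasure Q₁] {k l : ℝ≥0∞} (hkl : k + l = 1) :
    renyiSimple a (k • P₀ + l • P₁) (k • Q₀ + l • Q₁)
      ≤ k * renyiSimple a P₀ Q₀ + l * renyiSimple a P₁ Q₁ := by
  obtain ⟨hk, hl⟩ := ENNReal.add_ne_top.1 (hkl ▸ ENNReal.one_ne_top)
  have := P₀.smul_finite hk
  have := Q₀.smul_finite hk
  have := P₁.smul_finite hl
  have := Q₁.smul_finite hl
  set H₀ := hellingerInt a P₀ Q₀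
  set H₁ := hellingerInt a P₁ Q₁
  have hH₀ : H₀ ≤ 1 := hellingerInt_le_one ha₀ ha₁ P₀ Q₀
  have hH₁ : H₁ ≤ 1 := hellingerInt_le_one ha₀ ha₁ P₁ Q₁
  have hconcave : k * H₀ + l * H₁ ≤ hellingerInt a (k • P₀ + l • P₁) (k • Q₀ + l • Q₁) := by
    rw [← hellingerInt_smul ha₀ ha₁ _ _ hk, ← hellingerInt_smul ha₀ ha₁ _ _ hl]
    exact hellingerInt_add_le ha₀ ha₁ _ _ _ _
  have hgeom : (hellingerInt a (k • P₀ + l • P₁) (k • Q₀ + l • Q₁))⁻¹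
      ≤ H₀⁻¹ ^ k.toReal * H₁⁻¹ ^ l.toReal := by
    rw [ENNReal.inv_rpow, ENNReal.inv_rpow,
      ← ENNReal.mul_inv (.inr (ENNReal.rpow_ne_top_of_nonneg ENNReal.toReal_nonneg
          (hH₁.trans_lt ENNReal.one_lt_top).ne))
        (.inl (ENNReal.rpow_ne_top_of_nonneg ENNReal.toReal_nonneg
          (hH₀.trans_lt ENNReal.one_lt_top).ne)),
      ENNReal.inv_le_inv]
    exact (ENNReal.geom_mean_le_arith_mean2_weighted hkl H₀ H₁).trans hconcave
  have hlog_nonneg {H : ℝ≥0∞} (hH : H ≤ 1) (w : ℝ≥0∞) :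
      0 ≤ (w.toReal : EReal) * ENNReal.log H⁻¹ :=
    mul_nonneg (EReal.coe_nonneg.2 ENNReal.toReal_nonneg)
      (ENNReal.zero_le_log_iff.2 (ENNReal.one_le_inv.2 hH))
  rw [renyiSimple_eq_mul_log_inv, renyiSimple_eq_mul_log_inv, renyiSimple_eq_mul_log_inv]
  calc _ ≤ (((1 - a)⁻¹ : ℝ) : EReal) * ENNReal.log (H₀⁻¹ ^ k.toReal * H₁⁻¹ ^ l.toReal) := by
        gcongr
    _ = (((1 - a)⁻¹ : ℝ) : EReal)
          * (k.toReal * ENNReal.log H₀⁻¹ + l.toReal * ENNReal.log H₁⁻¹) := by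
        rw [ENNReal.log_mul_add, ENNReal.log_rpow, ENNReal.log_rpow]
    _ = _ := by
        rw [EReal.left_distrib_of_nonneg (hlog_nonneg hH₀ k) (hlog_nonneg hH₁ l), mul_left_comm,
          mul_left_comm _ (l.toReal : EReal), EReal.coe_ennreal_toReal hk,
          EReal.coe_ennreal_toReal hl]

theorem limsup_renyiSimple_mix_le {F : Filter ℝ} [F.NeBot] (hF : ∀ᶠ a in F, a ∈ Icc 0 1)
    (P₀ P₁ Q₀ Q₁ : Measure X)
    [IsProbabilityMeasure P₀] [IsProbabilityMeasure P₁]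
    [IsProbabilityMeasure Q₀] [IsProbabilityMeasure Q₁] {k l : ℝ≥0∞} (hkl : k + l = 1) :
    limsup (fun a => renyiSimple a (k • P₀ + l • P₁) (k • Q₀ + l • Q₁)) F
      ≤ k * limsup (fun a => renyiSimple a P₀ Q₀) F
        + l * limsup (fun a => renyiSimple a P₁ Q₁) F := by
  obtain ⟨hk, hl⟩ := ENNReal.add_ne_top.1 (hkl ▸ ENNReal.one_ne_top)
  exact EReal.limsup_le_mul_limsup_add_mul_limsup (EReal.coe_ennreal_nonneg k)
    (EReal.coe_ennreal_eq_top_iff.not.2 hk) (EReal.coe_ennreal_nonneg l)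
    (EReal.coe_ennreal_eq_top_iff.not.2 hl)
    (hF.mono fun _ ha => renyiSimple_nonneg ha.1 ha.2 _ _)
    (hF.mono fun _ ha => renyiSimple_nonneg ha.1 ha.2 _ _)
    (hF.mono fun _ ha => renyiSimple_mix_le ha.1 ha.2 _ _ _ _ hkl)

end

theorem renyiDiv_jointly_convex_general
    {X : Type*} [MeasurableSpace X] (α : ℝ≥0∞) (hα : α ≤ 1)
    (P₀ P₁ Q₀ Q₁ : Measure X)
    [IsProbabilityMeasure P₀] [IsProbabilityMeasure P₁]
    [IsProbabilityMeasure Q₀] [IsProbabilityMeasure Q₁]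
    (l : ℝ≥0∞) (hl1 : l < 1) :
    renyiDiv α ((1 - l) • P₀ + l • P₁) ((1 - l) • Q₀ + l • Q₁)
      ≤ ((1 - l : ℝ≥0∞) : EReal) * renyiDiv α P₀ Q₀
        + (l : EReal) * renyiDiv α P₁ Q₁ := by
  have hkl : 1 - l + l = 1 := tsub_add_cancel_of_le hl1.le
  unfold renyiDiv
  split_ifs with h0 h1 htop
  · exact limsup_renyiSimple_mix_le
      (mem_of_superset (Ioo_mem_nhdsGT zero_lt_one) Ioo_subset_Icc_self) _ _ _ _ hkl
  · exact limsup_renyiSimple_mix_le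
      (mem_of_superset (Ioo_mem_nhdsLT zero_lt_one) Ioo_subset_Icc_self) _ _ _ _ hkl
  · exact absurd (htop ▸ hα) (by simp)
  · exact renyiSimple_mix_le ENNReal.toReal_nonneg
      (ENNReal.toReal_le_of_le_ofReal zero_le_one (by simpa using hα)) _ _ _ _ hkl

/-- **Joint convexity for orders `α ∈ [0,1]`.** For any two pairs `(P₀,Q₀)` and
`(P₁,Q₁)` of probability distributions and any `0 < l < 1`,
`D_α((1-l)P₀ + lP₁ ‖ (1-l)Q₀ + lQ₁) ≤ (1-l) D_α(P₀‖Q₀) + l D_α(P₁‖Q₁)`. -/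
theorem renyiDiv_jointly_convex
    {X : Type*} [MeasurableSpace X] (α : ℝ≥0∞) (hα : α ≤ 1)
    (P₀ P₁ Q₀ Q₁ : Measure X)
    [IsProbabilityMeasure P₀] [IsProbabilityMeasure P₁]
    [IsProbabilityMeasure Q₀] [IsProbabilityMeasure Q₁]
    (l : ℝ≥0∞) (hl0 : 0 < l) (hl1 : l < 1) :
    renyiDiv α ((1 - l) • P₀ + l • P₁) ((1 - l) • Q₀ + l • Q₁)
      ≤ ((1 - l : ℝ≥0∞) : EReal) * renyiDiv α P₀ Q₀
        + (l : EReal) * renyiDiv α P₁ Q₁ :=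
  renyiDiv_jointly_convex_general α hα P₀ P₁ Q₀ Q₁ l hl1
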